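/- arXiv:2405.15207 — 2 statements merged into one kernel-verified Lean document; each statement's English description precedes it below -/
import Mathlib

section
/- Let M be a matroid, (R,S) a partition of E(M), and let 𝓕 be the set of subsets X of E(M) for which λ_{M/X}(R − X) = 0. Then 𝓕 is a modular cut of M, in the extended sense: (i) 𝓕 is closed under taking supersets; (ii) if X, Y ∈ 𝓕 form a modular pair (r(X)+r(Y) = r(X∩Y)+r(X∪Y)) then X ∩ Y ∈ 𝓕; (iii) if Y ∈ 𝓕 and X ⊆ Y with r(X) = r(Y), then X ∈ 𝓕. -/
open Set

namespace Matroid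

variable {α : Type*}

/-- The rank of a set in a matroid: the supremum of the cardinalities of its
independent subsets. -/
noncomputable def rFun (M : Matroid α) (X : Set α) : ℕ :=
  sSup {n | ∃ I ⊆ X, M.Indep I ∧ I.ncard = n}

/-- The connectivity function λ of a matroid. -/
noncomputable def conn (M : Matroid α) (A : Set α) : ℤ :=
  (M.rFun A : ℤ) + M.rFun (M.E \ A) - M.rFun M.E

/-- The local connectivity ⊓(X,Y) = r(X) + r(Y) - r(X ∪ Y). -/
noncomputable def localConn (M : Matroid α) (X Y : Set α) : ℤ :=
  (M.rFun X : ℤ) + M.rFun Y - M.rFun (X ∪ Y)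

/-- The local coconnectivity ⊓*(X,Y): the local connectivity in the dual matroid. -/
noncomputable def localCoconn (M : Matroid α) (X Y : Set α) : ℤ :=
  M✶.localConn X Y

/-- The connectivity λ_{M/X}(A) of a set `A ⊆ E \ X` in the contraction `M/X`,
written in terms of the rank function of `M` via r_{M/X}(B) = r(B ∪ X) - r(X). -/
noncomputable def connContract (M : Matroid α) (X A : Set α) : ℤ :=
  ((M.rFun (A ∪ X) : ℤ) - M.rFun X) + ((M.rFun (((M.E \ X) \ A) ∪ X) : ℤ) - M.rFun X)
    - ((M.rFun M.E : ℤ) - M.rFun X)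

variable {M : Matroid α} {I J X Y : Set α}

lemma Indep.ncard_le_rFun [M.Finite] (hJ : M.Indep J) (hJX : J ⊆ X) :
    J.ncard ≤ M.rFun X := by
  apply le_csSup
  · exact ⟨M.E.ncard, by
      rintro n ⟨I, hIX, hI, rfl⟩
      exact ncard_le_ncard hI.subset_ground M.ground_finite⟩
  · exact ⟨J, hJX, hJ, rfl⟩

lemma IsBasis'.rFun_eq [M.Finite] (hI : M.IsBasis' I X) : M.rFun X = I.ncard := by
  refine le_antisymm (csSup_le ⟨0, ∅, empty_subset _, M.empty_indep, by simp⟩ ?_)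
    (hI.indep.ncard_le_rFun hI.subset)
  rintro n ⟨J, hJX, hJ, rfl⟩
  obtain ⟨J', hJ', hJJ'⟩ := hJ.subset_isBasis'_of_subset hJX
  have h2 : J'.ncard = I.ncard := by
    rw [ncard_def, hJ'.encard_eq_encard hI, ← ncard_def]
  exact (ncard_le_ncard hJJ' (M.set_finite J' hJ'.indep.subset_ground)).trans h2.le

lemma rFun_mono' (M : Matroid α) [M.Finite] (h : X ⊆ Y) : M.rFun X ≤ M.rFun Y := by
  obtain ⟨I, hI⟩ := M.exists_isBasis' X
  rw [hI.rFun_eq]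
  exact hI.indep.ncard_le_rFun (hI.subset.trans h)

lemma rFun_submod' (M : Matroid α) [M.Finite] (X Y : Set α) :
    M.rFun (X ∪ Y) + M.rFun (X ∩ Y) ≤ M.rFun X + M.rFun Y := by
  obtain ⟨I, hI⟩ := M.exists_isBasis' (X ∩ Y)
  obtain ⟨B, hB, hIB⟩ := hI.indep.subset_isBasis'_of_subset
    (hI.subset.trans (inter_subset_left.trans subset_union_left))
  rw [hB.rFun_eq, hI.rFun_eq]
  have hBfin : B.Finite := M.set_finite B hB.indep.subset_ground
  have h1 : (B ∩ X).ncard ≤ M.rFun X :=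
    (hB.indep.inter_right X).ncard_le_rFun inter_subset_right
  have h2 : (B ∩ Y).ncard ≤ M.rFun Y :=
    (hB.indep.inter_right Y).ncard_le_rFun inter_subset_right
  have hu : (B ∩ X) ∪ (B ∩ Y) = B := by
    rw [← inter_union_distrib_left]; exact inter_eq_left.2 hB.subset
  have hii : (B ∩ X) ∩ (B ∩ Y) = B ∩ (X ∩ Y) := by ext a; simp only [mem_inter_iff]; tauto
  have hcard := ncard_union_add_ncard_inter (B ∩ X) (B ∩ Y)
    (hBfin.inter_of_left X) (hBfin.inter_of_left Y)
  rw [hu, hii] at hcard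
  have hI' : I.ncard ≤ (B ∩ (X ∩ Y)).ncard :=
    ncard_le_ncard (subset_inter hIB hI.subset) (hBfin.inter_of_left _)
  omega

theorem modularCut_of_guts (M : Matroid α) [M.Finite] (R S : Set α)
    (hRS : R ∪ S = M.E) (hd : Disjoint R S) (F : Set (Set α))
    (hF : F = {X | X ⊆ M.E ∧ M.connContract X (R \ X) = 0}) :
    (∀ X Y, X ∈ F → X ⊆ Y → Y ⊆ M.E → Y ∈ F) ∧
    (∀ X Y, X ∈ F → Y ∈ F →
      (M.rFun X : ℤ) + M.rFun Y = M.rFun (X ∩ Y) + M.rFun (X ∪ Y) → X ∩ Y ∈ F) ∧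
    (∀ X Y, Y ∈ F → X ⊆ Y → M.rFun X = M.rFun Y → X ∈ F) := by
  have hRE : R ⊆ M.E := hRS ▸ subset_union_left
  have hSE : S ⊆ M.E := hRS ▸ subset_union_right
  have hmemE : ∀ a ∈ M.E, a ∈ R ∨ a ∈ S := fun a ha => by rwa [← hRS] at ha
  have hdj : ∀ a, a ∈ R → a ∉ S := fun a ha => disjoint_left.mp hd ha
  -- `connContract X (R \ X)` in terms of `R ∪ X` and `S ∪ X`
  have hg : ∀ X, X ⊆ M.E → M.connContract X (R \ X) =
      (M.rFun (R ∪ X) : ℤ) + M.rFun (S ∪ X) - M.rFun X - M.rFun M.E := by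
    intro X hX
    have h1 : R \ X ∪ X = R ∪ X := diff_union_self
    have h2 : ((M.E \ X) \ (R \ X)) ∪ X = S ∪ X := by
      ext a
      have h3 := hmemE a
      have h4 := hdj a
      have h5 := @hSE a
      have h6 := @hX a
      simp only [mem_union, mem_diff]
      tauto
    simp only [connContract, h1, h2]
    ring
  -- nonnegativity of the "guts" function
  have hge : ∀ X, X ⊆ M.E →
      M.rFun M.E + M.rFun X ≤ M.rFun (R ∪ X) + M.rFun (S ∪ X) := by
    intro X hX
    have hsub := M.rFun_submod' (R ∪ X) (S ∪ X)
    have hu : (R ∪ X) ∪ (S ∪ X) = M.E := by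
      ext a
      have h3 := hmemE a
      have h4 := @hRE a
      have h5 := @hSE a
      have h6 := @hX a
      simp only [mem_union]
      tauto
    have hi : (R ∪ X) ∩ (S ∪ X) = X := by
      ext a
      have h4 := hdj a
      simp only [mem_inter_iff, mem_union]
      tauto
    rwa [hu, hi] at hsub
  have hmemF : ∀ X, X ∈ F ↔ X ⊆ M.E ∧
      (M.rFun (R ∪ X) : ℤ) + M.rFun (S ∪ X) = M.rFun X + M.rFun M.E := by
    intro X
    rw [hF, mem_setOf_eq]
    constructor
    · rintro ⟨h1, h2⟩
      rw [hg X h1] at h2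
      exact ⟨h1, by linarith⟩
    · rintro ⟨h1, h2⟩
      exact ⟨h1, by rw [hg X h1]; linarith⟩
  refine ⟨?_, ?_, ?_⟩
  · -- superset closure
    intro X Y hX hXY hYE
    rw [hmemF] at hX ⊢
    obtain ⟨hXE, hX2⟩ := hX
    refine ⟨hYE, ?_⟩
    have s1 := M.rFun_submod' (R ∪ X) Y
    have e1 : (R ∪ X) ∪ Y = R ∪ Y := by
      ext a; have := @hXY a; simp only [mem_union]; tauto
    have e2 : (R ∪ X) ∩ Y = (R ∩ Y) ∪ X := by
      ext a; have := @hXY a; simp only [mem_union, mem_inter_iff]; tauto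
    rw [e1, e2] at s1
    have s2 := M.rFun_submod' (S ∪ X) Y
    have e3 : (S ∪ X) ∪ Y = S ∪ Y := by
      ext a; have := @hXY a; simp only [mem_union]; tauto
    have e4 : (S ∪ X) ∩ Y = (S ∩ Y) ∪ X := by
      ext a; have := @hXY a; simp only [mem_union, mem_inter_iff]; tauto
    rw [e3, e4] at s2
    have s3 := M.rFun_submod' ((R ∩ Y) ∪ X) ((S ∩ Y) ∪ X)
    have e5 : ((R ∩ Y) ∪ X) ∪ ((S ∩ Y) ∪ X) = Y := by
      ext a
      have h3 := hmemE a
      have h6 := @hXY a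
      have h7 := @hYE a
      simp only [mem_union, mem_inter_iff]
      tauto
    have e6 : ((R ∩ Y) ∪ X) ∩ ((S ∩ Y) ∪ X) = X := by
      ext a
      have h4 := hdj a
      simp only [mem_union, mem_inter_iff]
      tauto
    rw [e5, e6] at s3
    have s4 := hge Y hYE
    omega
  · -- modular pairs
    intro X Y hX hY hmod
    rw [hmemF] at hX hY ⊢
    obtain ⟨hXE, hX2⟩ := hX
    obtain ⟨hYE, hY2⟩ := hY
    refine ⟨inter_subset_left.trans hXE, ?_⟩
    have s1 := M.rFun_submod' (R ∪ X) (R ∪ Y)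
    have e1 : (R ∪ X) ∪ (R ∪ Y) = R ∪ (X ∪ Y) := by
      ext a; simp only [mem_union]; tauto
    have e2 : (R ∪ X) ∩ (R ∪ Y) = R ∪ (X ∩ Y) := by
      ext a; simp only [mem_union, mem_inter_iff]; tauto
    rw [e1, e2] at s1
    have s2 := M.rFun_submod' (S ∪ X) (S ∪ Y)
    have e3 : (S ∪ X) ∪ (S ∪ Y) = S ∪ (X ∪ Y) := by
      ext a; simp only [mem_union]; tauto
    have e4 : (S ∪ X) ∩ (S ∪ Y) = S ∪ (X ∩ Y) := by
      ext a; simp only [mem_union, mem_inter_iff]; tauto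
    rw [e3, e4] at s2
    have s3 := hge (X ∪ Y) (union_subset hXE hYE)
    have s4 := hge (X ∩ Y) (inter_subset_left.trans hXE)
    omega
  · -- rank-preserving subsets
    intro X Y hY hXY hr
    rw [hmemF] at hY ⊢
    obtain ⟨hYE, hY2⟩ := hY
    have hXE : X ⊆ M.E := hXY.trans hYE
    refine ⟨hXE, ?_⟩
    have s1 := M.rFun_submod' (R ∪ X) Y
    have e1 : (R ∪ X) ∪ Y = R ∪ Y := by
      ext a; have := @hXY a; simp only [mem_union]; tauto
    rw [e1] at s1
    have m1 : M.rFun X ≤ M.rFun ((R ∪ X) ∩ Y) :=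
      M.rFun_mono' (subset_inter (subset_union_right) hXY)
    have m2 : M.rFun (R ∪ X) ≤ M.rFun (R ∪ Y) :=
      M.rFun_mono' (union_subset_union_right R hXY)
    have s2 := M.rFun_submod' (S ∪ X) Y
    have e2 : (S ∪ X) ∪ Y = S ∪ Y := by
      ext a; have := @hXY a; simp only [mem_union]; tauto
    rw [e2] at s2
    have m3 : M.rFun X ≤ M.rFun ((S ∪ X) ∩ Y) :=
      M.rFun_mono' (subset_inter (subset_union_right) hXY)
    have m4 : M.rFun (S ∪ X) ≤ M.rFun (S ∪ Y) :=
      M.rFun_mono' (union_subset_union_right S hXY)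
    omega

end Matroid
end

section
/- Let M be a matroid, (Z,A) a partition of E(M) with λ_M(Z) = t > 0, and let M_s be obtained from M by freely adding e_1, …, e_s into the guts of Z. If X ⊆ A and cl_{M_s}(X) contains some e_i, then ⊓_M(X, Z) = t. -/
open Set

namespace Matroid

variable {α : Type*}

/-- `M'` is obtained from `M` by freely adding the element `e` into the guts of `Z`:
`M'` is the single-element extension of `M` by `e` corresponding to the modular cut
{F ⊆ E(M) : λ_{M/F}(Z - F) = 0}.  This is characterised by: `M'` restricted to `E(M)`
is `M`, and for `X ⊆ E(M)` the rank of `X ∪ {e}` in `M'` equals the rank of `X` in `M`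
precisely when `X` lies in the modular cut. -/
structure IsGutsExt (M : Matroid α) (Z : Set α) (M' : Matroid α) (e : α) : Prop where
  not_mem : e ∉ M.E
  ground_eq : M'.E = insert e M.E
  indep_iff : ∀ I ⊆ M.E, (M'.Indep I ↔ M.Indep I)
  rank_insert_eq_iff : ∀ X ⊆ M.E,
    (M'.rFun (insert e X) = M.rFun X ↔ M.connContract X (Z \ X) = 0)

section Aux

variable {M M' : Matroid α} {X Y I J : Set α} {f : α}

lemma Basis'.ncard_eq_aux (hI : M.IsBasis' I X) (hJ : M.IsBasis' J X) : I.ncard = J.ncard :=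
  IsBase.ncard_eq_ncard_of_isBase (isBase_restrict_iff'.2 hI) (isBase_restrict_iff'.2 hJ)

lemma rFun_eq_ncard (M : Matroid α) [M.Finite] (hI : M.IsBasis' I X) : M.rFun X = I.ncard := by
  have hne : {n | ∃ I ⊆ X, M.Indep I ∧ I.ncard = n}.Nonempty :=
    ⟨0, ∅, empty_subset X, M.empty_indep, by simp⟩
  apply le_antisymm
  · apply csSup_le hne
    rintro n ⟨J, hJX, hJ, rfl⟩
    obtain ⟨K, hK, hJK⟩ := hJ.subset_isBasis'_of_subset hJX
    rw [← Basis'.ncard_eq_aux hK hI]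
    exact ncard_le_ncard hJK (M.set_finite K hK.indep.subset_ground)
  · exact le_csSup ⟨M.E.ncard, by
      rintro n ⟨J, hJX, hJ, rfl⟩
      exact ncard_le_ncard hJ.subset_ground M.ground_finite⟩
      ⟨I, hI.subset, hI.indep, rfl⟩

lemma rFun_congr_aux (h : ∀ I ⊆ X, (M'.Indep I ↔ M.Indep I)) : M'.rFun X = M.rFun X := by
  unfold rFun
  congr 1
  ext n
  constructor <;> rintro ⟨I, hIX, hI, rfl⟩
  · exact ⟨I, hIX, (h I hIX).1 hI, rfl⟩
  · exact ⟨I, hIX, (h I hIX).2 hI, rfl⟩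

lemma rFun_insert_eq_iff (M : Matroid α) [M.Finite] (hX : X ⊆ M.E) (hf : f ∈ M.E) :
    M.rFun (insert f X) = M.rFun X ↔ f ∈ M.closure X := by
  obtain ⟨I, hI⟩ := M.exists_isBasis X hX
  constructor
  · intro h
    by_contra hcl
    have hfI : f ∉ I := fun hfI => hcl (M.subset_closure X hX (hI.subset hfI))
    have hind : M.Indep (insert f I) := by
      rw [hI.indep.insert_indep_iff_of_notMem hfI, hI.closure_eq_closure]
      exact ⟨hf, hcl⟩
    have hle : (insert f I).ncard ≤ M.rFun (insert f X) := by
      apply le_csSup ⟨M.E.ncard, by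
        rintro n ⟨J, hJX, hJ, rfl⟩
        exact ncard_le_ncard hJ.subset_ground M.ground_finite⟩
      exact ⟨insert f I, insert_subset_insert hI.subset, hind, rfl⟩
    rw [h, rFun_eq_ncard M hI.isBasis',
      ncard_insert_of_notMem hfI (M.set_finite I hI.indep.subset_ground)] at hle
    omega
  · intro hcl
    have hB : M.IsBasis I (insert f X) := by
      apply hI.indep.isBasis_of_subset_of_subset_closure (hI.subset.trans (subset_insert _ _))
      rw [hI.closure_eq_closure]
      exact insert_subset hcl (M.subset_closure X hX)
    rw [rFun_eq_ncard M hB.isBasis', rFun_eq_ncard M hI.isBasis']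

end Aux

theorem localConn_eq_of_closure_meets (M : Matroid α) [M.Finite] (Z : Set α) (hZ : Z ⊆ M.E) (t : ℤ)
    (ht : M.conn Z = t) (s : ℕ) (e : Fin s → α) (he : Function.Injective e)
    (Ms : ℕ → Matroid α) (h0 : Ms 0 = M) (hfin : ∀ i, (Ms i).Finite)
    (hstep : ∀ i : Fin s, IsGutsExt (Ms (i : ℕ)) Z (Ms ((i : ℕ) + 1)) (e i)) (htpos : 0 < t)
    (X : Set α) (hX : X ⊆ M.E \ Z) (i : Fin s) (hi : e i ∈ (Ms s).closure X) :
    M.localConn X Z = t := by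
  classical
  -- abbreviations
  set A : Set α := M.E \ Z with hA
  set G : ℕ → Set α := fun k => e '' {j : Fin s | (j : ℕ) < k} with hG
  -- ground set description
  have hground : ∀ k, k ≤ s → (Ms k).E = M.E ∪ G k := by
    intro k
    induction k with
    | zero =>
      intro _
      have : G 0 = ∅ := by simp [hG]
      rw [this, union_empty, h0]
    | succ k ih =>
      intro hks
      have hk : k < s := Nat.lt_of_succ_le hks
      have hGsucc : G (k + 1) = insert (e ⟨k, hk⟩) (G k) := by
        have : {j : Fin s | (j : ℕ) < k + 1} = insert (⟨k, hk⟩ : Fin s) {j : Fin s | (j : ℕ) < k} := by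
          ext j
          simp [Nat.lt_succ_iff_lt_or_eq, Fin.ext_iff, or_comm]
          omega
        rw [hG]
        simp only
        rw [this, image_insert_eq]
      rw [(hstep ⟨k, hk⟩).ground_eq, ih hk.le, hGsucc, Set.union_insert]
  have hGE : ∀ k, ∀ x ∈ G k, x ∉ M.E := by
    rintro k x ⟨j, hj, rfl⟩ hmem
    exact (hstep j).not_mem (by
      rw [hground (j : ℕ) (j.2.le)]
      exact Or.inl hmem)
  have hGmono : ∀ j k, j ≤ k → G j ⊆ G k := by
    rintro j k hjk x ⟨l, hl, rfl⟩
    exact ⟨l, lt_of_lt_of_le hl hjk, rfl⟩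
  have hmono : ∀ j k, j ≤ k → k ≤ s → (Ms j).E ⊆ (Ms k).E := by
    intro j k hjk hks
    rw [hground j (hjk.trans hks), hground k hks]
    exact union_subset_union_right _ (hGmono j k hjk)
  have hME : ∀ k, k ≤ s → M.E ⊆ (Ms k).E := by
    intro k hk
    have := hmono 0 k (Nat.zero_le k) hk
    rwa [h0] at this
  -- single step rank transfer
  have hstep' : ∀ k, (hk : k < s) → ∀ S ⊆ (Ms k).E, (Ms (k + 1)).rFun S = (Ms k).rFun S := by
    intro k hk S hS
    exact rFun_congr_aux (fun I hIS => (hstep ⟨k, hk⟩).indep_iff I (hIS.trans hS))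
  -- rank transfer
  have htrans : ∀ j k, j ≤ k → k ≤ s → ∀ S ⊆ (Ms j).E, (Ms k).rFun S = (Ms j).rFun S := by
    intro j k
    induction k with
    | zero =>
      intro hjk _ S _
      rw [Nat.le_zero] at hjk
      rw [hjk]
    | succ k ih =>
      intro hjk hks S hS
      rcases Nat.lt_or_ge j (k + 1) with h | h
      · have hjk' : j ≤ k := Nat.lt_succ_iff.1 h
        have hks' : k ≤ s := Nat.le_of_succ_le hks
        rw [hstep' k (Nat.lt_of_succ_le hks) S (hS.trans (hmono j k hjk' hks'))]
        exact ih hjk' hks' S hS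
      · rw [le_antisymm hjk h]
  have hrM : ∀ k, k ≤ s → ∀ S ⊆ M.E, (Ms k).rFun S = M.rFun S := by
    intro k hk S hS
    rw [htrans 0 k (Nat.zero_le k) hk S (by rw [h0]; exact hS), h0]
  -- the rank of the ground set is stable
  have hgr : ∀ k, k ≤ s → (Ms k).rFun ((Ms k).E) = M.rFun M.E := by
    intro k
    induction k with
    | zero => intro _; rw [h0]
    | succ k ih =>
      intro hks
      have hk : k < s := Nat.lt_of_succ_le hks
      have hks' : k ≤ s := hk.le
      haveI := hfin k
      haveI := hfin (k + 1)
      have hZk : Z ⊆ (Ms k).E := hZ.trans (hME k hks')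
      have hcut : (Ms k).connContract Z (Z \ Z) = 0 := by
        rw [diff_self]
        simp only [connContract]
        have h1 : (∅ : Set α) ∪ Z = Z := empty_union Z
        have h2 : (((Ms k).E \ Z) \ ∅) ∪ Z = (Ms k).E := by
          rw [diff_empty, diff_union_self, union_eq_left.2 hZk]
        rw [h1, h2]
        ring
      have hins : (Ms (k + 1)).rFun (insert (e ⟨k, hk⟩) Z) = (Ms k).rFun Z :=
        ((hstep ⟨k, hk⟩).rank_insert_eq_iff Z hZk).2 hcut
      have hsub : (Ms k).E ⊆ (Ms (k + 1)).E := hmono k (k + 1) k.le_succ hks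
      have hZk1 : Z ⊆ (Ms (k + 1)).E := hZk.trans hsub
      have hfk : e ⟨k, hk⟩ ∈ (Ms (k + 1)).E := by
        rw [(hstep ⟨k, hk⟩).ground_eq]; exact mem_insert _ _
      have hcl : e ⟨k, hk⟩ ∈ (Ms (k + 1)).closure Z := by
        rw [← rFun_insert_eq_iff (Ms (k + 1)) hZk1 hfk, hins]
        exact (hstep' k hk Z hZk).symm
      have hcl2 : e ⟨k, hk⟩ ∈ (Ms (k + 1)).closure ((Ms k).E) :=
        (Ms (k + 1)).closure_subset_closure hZk hcl
      have hEk1 : (Ms (k + 1)).E = insert (e ⟨k, hk⟩) ((Ms k).E) := (hstep ⟨k, hk⟩).ground_eq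
      have h3 : (Ms (k + 1)).rFun ((Ms (k + 1)).E) = (Ms (k + 1)).rFun ((Ms k).E) := by
        rw [hEk1]
        exact (rFun_insert_eq_iff (Ms (k + 1)) hsub hfk).2 hcl2
      rw [h3, hstep' k hk _ Subset.rfl, ih hks']
  -- Z \ A = Z and Z ∪ A = M.E
  have hZA : Z \ A = Z := by
    ext x
    simp only [hA, mem_diff, mem_setOf_eq, and_iff_left_iff_imp]
    intro hxZ hmem
    exact hmem.2 hxZ
  have hZuA : Z ∪ A = M.E := union_diff_cancel hZ
  have hAE : A ⊆ M.E := diff_subset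
  -- rank of A ∪ G k is stable
  have hAr : ∀ k, k ≤ s → (Ms k).rFun (A ∪ G k) = M.rFun A := by
    intro k
    induction k with
    | zero =>
      intro _
      have : G 0 = ∅ := by simp [hG]
      rw [this, union_empty, h0]
    | succ k ih =>
      intro hks
      have hk : k < s := Nat.lt_of_succ_le hks
      have hks' : k ≤ s := hk.le
      haveI := hfin k
      haveI := hfin (k + 1)
      have hAk : A ⊆ (Ms k).E := hAE.trans (hME k hks')
      have hset : (((Ms k).E \ A) \ Z) ∪ A = A ∪ G k := by
        rw [hground k hks']
        ext x
        constructor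
        · rintro (⟨⟨hx1 | hx1, hx2⟩, hx3⟩ | hx)
          · exact Or.inl ⟨hx1, hx3⟩
          · exact Or.inr hx1
          · exact Or.inl hx
        · rintro (hx | hxG)
          · exact Or.inr hx
          · exact Or.inl ⟨⟨Or.inr hxG, fun hA' => hGE k x hxG hA'.1⟩,
              fun hZ' => hGE k x hxG (hZ hZ')⟩
      have hcut : (Ms k).connContract A (Z \ A) = 0 := by
        simp only [connContract]
        rw [hZA, hZuA, hset, hrM k hks' M.E Subset.rfl, hrM k hks' A hAE, ih hks', hgr k hks']
        ring
      have hins : (Ms (k + 1)).rFun (insert (e ⟨k, hk⟩) A) = (Ms k).rFun A :=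
        ((hstep ⟨k, hk⟩).rank_insert_eq_iff A hAk).2 hcut
      have hsub : (Ms k).E ⊆ (Ms (k + 1)).E := hmono k (k + 1) k.le_succ hks
      have hAk1 : A ⊆ (Ms (k + 1)).E := hAk.trans hsub
      have hfk : e ⟨k, hk⟩ ∈ (Ms (k + 1)).E := by
        rw [(hstep ⟨k, hk⟩).ground_eq]; exact mem_insert _ _
      have hcl : e ⟨k, hk⟩ ∈ (Ms (k + 1)).closure A := by
        rw [← rFun_insert_eq_iff (Ms (k + 1)) hAk1 hfk, hins]
        exact (hstep' k hk A hAk).symm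
      have hsub' : A ∪ G k ⊆ (Ms k).E := by
        rw [hground k hks']
        exact union_subset (hAE.trans subset_union_left) subset_union_right
      have hcl2 : e ⟨k, hk⟩ ∈ (Ms (k + 1)).closure (A ∪ G k) :=
        (Ms (k + 1)).closure_subset_closure subset_union_left hcl
      have hGsucc : G (k + 1) = insert (e ⟨k, hk⟩) (G k) := by
        have : {j : Fin s | (j : ℕ) < k + 1} = insert (⟨k, hk⟩ : Fin s) {j : Fin s | (j : ℕ) < k} := by
          ext j
          simp [Nat.lt_succ_iff_lt_or_eq, Fin.ext_iff, or_comm]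
          omega
        rw [hG]
        simp only
        rw [this, image_insert_eq]
      rw [hGsucc, Set.union_insert,
        (rFun_insert_eq_iff (Ms (k + 1)) (hsub'.trans hsub) hfk).2 hcl2,
        hstep' k hk (A ∪ G k) hsub', ih hks']
  -- main argument
  set k := (i : ℕ) with hkdef
  have hk : k < s := i.2
  haveI := hfin s
  haveI := hfin k
  haveI := hfin (k + 1)
  have hXE : X ⊆ M.E := hX.trans diff_subset
  have hXs : X ⊆ (Ms s).E := hXE.trans (hME s le_rfl)
  have hfi : e i ∈ (Ms s).E := mem_ground_of_mem_closure hi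
  have h1 : (Ms s).rFun (insert (e i) X) = (Ms s).rFun X :=
    (rFun_insert_eq_iff (Ms s) hXs hfi).2 hi
  have hk1s : k + 1 ≤ s := hk
  have heiG : e i ∈ G (k + 1) := ⟨i, by rw [hkdef]; exact Nat.lt_succ_self _, rfl⟩
  have hins_sub : insert (e i) X ⊆ (Ms (k + 1)).E := by
    rw [hground (k + 1) hk1s]
    exact insert_subset (Or.inr heiG) (hXE.trans subset_union_left)
  have h2 : (Ms (k + 1)).rFun (insert (e i) X) = (Ms k).rFun X := by
    calc (Ms (k + 1)).rFun (insert (e i) X)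
        = (Ms s).rFun (insert (e i) X) := (htrans (k + 1) s hk1s le_rfl _ hins_sub).symm
      _ = (Ms s).rFun X := h1
      _ = (Ms k).rFun X := htrans k s hk.le le_rfl X (hXE.trans (hME k hk.le))
  have hXk : X ⊆ (Ms k).E := hXE.trans (hME k hk.le)
  have hcut : (Ms k).connContract X (Z \ X) = 0 :=
    ((hstep i).rank_insert_eq_iff X hXk).1 h2
  have hZX : Z \ X = Z := by
    ext x
    simp only [mem_diff, and_iff_left_iff_imp]
    intro hxZ hxX
    exact (hX hxX).2 hxZ
  have hsetX : (((Ms k).E \ X) \ Z) ∪ X = A ∪ G k := by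
    rw [hground k hk.le]
    ext x
    constructor
    · rintro (⟨⟨hx1 | hx1, hx2⟩, hx3⟩ | hx)
      · exact Or.inl ⟨hx1, hx3⟩
      · exact Or.inr hx1
      · exact Or.inl (hX hx)
    · rintro (hx | hxG)
      · by_cases hxX : x ∈ X
        · exact Or.inr hxX
        · exact Or.inl ⟨⟨Or.inl hx.1, hxX⟩, hx.2⟩
      · exact Or.inl ⟨⟨Or.inr hxG, fun hxX => hGE k x hxG (hXE hxX)⟩,
          fun hZ' => hGE k x hxG (hZ hZ')⟩
  simp only [connContract] at hcut
  rw [hZX, hsetX, hrM k hk.le (Z ∪ X) (union_subset hZ hXE), hrM k hk.le X hXE,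
    hAr k hk.le, hgr k hk.le] at hcut
  simp only [conn, ← hA] at ht
  simp only [localConn]
  rw [union_comm X Z]
  linarith

end Matroid
end
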